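/- Let (X_i, R, B) be a rigid C-datum and let 2 ≤ i ≤ i + 1 ≤ p with X_i ≠ ∅ and X_{i+1} ≠ ∅. Then: (a) if i is even and d = 2 then 𝖱_i ∪ 𝖱_{i+1} = [s_{i−1}, s_i], and otherwise 𝖱_i ∩ 𝖱_{i+1} = ∅; (b) if i is odd and d = 2 then 𝖡_i ∪ 𝖡_{i+1} = [s_i, s_{i+1}], and otherwise 𝖡_i ∩ 𝖡_{i+1} = ∅. -/

import Mathlib

open scoped Classical

/-- The numerical setup under which the truncated linear Nakayama algebra `Λ(n,l)`
admits a `d`-cluster tilting subcategory, together with the integers `s i`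
(defined by `2 * s i = …`). -/
structure NakSetup where
  n : ℤ
  l : ℤ
  d : ℤ
  p : ℤ
  s : ℤ → ℤ
  hl : 2 ≤ l
  hd : 2 ≤ d
  hp : 1 ≤ p
  hn : 2 * n = (p - 1) * ((d - 1) * l + 2) + l
  hcase : l = 2 ∨ (2 < l ∧ Even d ∧ Even p)
  hs_odd : ∀ i, 1 ≤ i → i ≤ p → Odd i → 2 * s i = (i - 1) * (d - 1) * l + 2 * i
  hs_even : ∀ i, 1 ≤ i → i ≤ p → Even i → 2 * s i = (i - 1) * ((d - 1) * l + 2) + l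

/-- A `C`-datum: subsets `X i ⊆ [1, l-1]` for `2 ≤ i ≤ p` (empty outside this range)
together with disjoint subsets `R, B ⊆ [1, n]`. -/
structure CDatum (S : NakSetup) where
  X : ℤ → Finset ℤ
  R : Finset ℤ
  B : Finset ℤ
  hX : ∀ i, X i ⊆ Finset.Icc 1 (S.l - 1)
  hXout : ∀ i, ¬(2 ≤ i ∧ i ≤ S.p) → X i = ∅
  hR : R ⊆ Finset.Icc 1 S.n
  hB : B ⊆ Finset.Icc 1 S.n
  hRB : Disjoint R B

namespace CDatum

variable {S : NakSetup}

/-- `m i = |X i|` (as an integer). -/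
noncomputable def m (D : CDatum S) (i : ℤ) : ℤ := (D.X i).card

/-- `l_i`: the minimum of `X i`, or `l` if `X i = ∅`. -/
noncomputable def lo (D : CDatum S) (i : ℤ) : ℤ :=
  if h : (D.X i).Nonempty then (D.X i).min' h else S.l

/-- `n_i`: the maximum of `X i`, or `0` if `X i = ∅`. -/
noncomputable def hi (D : CDatum S) (i : ℤ) : ℤ :=
  if h : (D.X i).Nonempty then (D.X i).max' h else 0

/-- The interval `𝖡_i`. -/
noncomputable def BI (D : CDatum S) (i : ℤ) : Finset ℤ :=
  if Odd i then Finset.Icc (S.s i) (S.s i + D.hi i - 1)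
  else Finset.Icc (S.s i - D.hi i + 1) (S.s i)

/-- The interval `𝖱_i`. -/
noncomputable def RI (D : CDatum S) (i : ℤ) : Finset ℤ :=
  if Odd i then Finset.Icc (S.s (i - 1) - (S.l - D.lo i) + 1) (S.s (i - 1))
  else Finset.Icc (S.s (i - 1)) (S.s (i - 1) + (S.l - D.lo i) - 1)

/-- A `C`-datum is rigid (the combinatorial form of being a `τ_d`-rigid pair). -/
def Rigid (D : CDatum S) : Prop :=
  (∀ x ∈ D.B, ∀ y ∈ D.R, x < y →
      ∃ z, x < z ∧ z + S.l - 2 < y ∧ Finset.Icc z (z + S.l - 2) ∩ (D.R ∪ D.B) = ∅) ∧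
  (∀ i, 2 ≤ i → i ≤ S.p → Odd i →
      D.hi (i - 1) + D.hi i ≤ S.l - 1 ∧ S.l + 1 ≤ D.lo i + D.lo (i + 1) ∧
      (S.d = 2 → D.hi i ≤ D.lo (i + 2) + 1 ∧ D.hi (i - 2) ≤ D.lo i + 1)) ∧
  (∀ i, 2 ≤ i → i ≤ S.p → Even i →
      D.hi i + D.hi (i + 1) ≤ S.l - 1 ∧ S.l + 1 ≤ D.lo (i - 1) + D.lo i) ∧
  (∀ i, 2 ≤ i → i ≤ S.p → D.R ∩ D.RI i = ∅ ∧ D.B ∩ D.BI i = ∅)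

/-- The left endpoint of `Ξ(i, i+k)` (the left endpoint of `𝖱_i`). -/
noncomputable def xiLo (D : CDatum S) (i : ℤ) : ℤ :=
  if Odd i then S.s (i - 1) - (S.l - D.lo i) + 1 else S.s (i - 1)

/-- The right endpoint of `Ξ(i, i+k)`, depending on `j = i + k`
(the right endpoint of `𝖡_{i+k}`). -/
noncomputable def xiHi (D : CDatum S) (j : ℤ) : ℤ :=
  if Even j then S.s j else S.s j + D.hi j - 1

/-- The interval `Ξ(i, i+k)`. -/
noncomputable def Xi (D : CDatum S) (i k : ℤ) : Finset ℤ :=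
  Finset.Icc (D.xiLo i) (D.xiHi (i + k))

/-- The union `𝖡_2 ∪ … ∪ 𝖡_p`. -/
noncomputable def BigB (D : CDatum S) : Finset ℤ :=
  (Finset.Icc 2 S.p).biUnion fun i => D.BI i

/-- The union `𝖱_2 ∪ … ∪ 𝖱_p`. -/
noncomputable def BigR (D : CDatum S) : Finset ℤ :=
  (Finset.Icc 2 S.p).biUnion fun i => D.RI i

/-- The interval `I` is support. -/
def IsSupport (D : CDatum S) (I : Finset ℤ) : Prop :=
  D.R ∩ I = ∅ ∧ D.B ∩ I = I \ D.BigB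

/-- The interval `I` is rigid. -/
def IsRigidI (D : CDatum S) (I : Finset ℤ) : Prop :=
  D.B ∩ I = ∅ ∧ D.R ∩ I = I \ D.BigR

/-- The interval `I` is support to rigid at `x ∈ I`. -/
def IsSuppToRigid (D : CDatum S) (I : Finset ℤ) (x : ℤ) : Prop :=
  x ∈ I ∧ D.B ∩ I = {y ∈ I | y ≤ x} ∧ (D.B ∩ I).Nonempty ∧
    D.R ∩ I = {y ∈ I | x + S.l ≤ y} ∧ (D.R ∩ I).Nonempty

/-- The interval `I` is rigid to support at `x ∈ I`. -/
def IsRigidToSupp (D : CDatum S) (I : Finset ℤ) (x : ℤ) : Prop :=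
  x ∈ I ∧ D.R ∩ I = {y ∈ I | y ≤ x} ∧ (D.R ∩ I).Nonempty ∧
    D.B ∩ I = {y ∈ I | x + 1 ≤ y} ∧ (D.B ∩ I).Nonempty

/-- `(X_i, …, X_{i+k})` is an admissible configuration (types (I)–(VIII)). -/
def Admissible (D : CDatum S) (i k : ℤ) : Prop :=
  2 ≤ i ∧ i + k ≤ S.p ∧ 0 ≤ k ∧
  (∀ j, 0 ≤ j → j ≤ k → (D.X (i + j)).Nonempty) ∧
  ((k = 0 ∧ D.lo i = 1 ∧ D.hi i < S.l - 1 ∧ D.IsSupport (D.Xi i k)) ∨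
   (k = 0 ∧ 1 < D.lo i ∧ D.hi i = S.l - 1 ∧ D.IsRigidI (D.Xi i k)) ∨
   (k = 0 ∧ D.lo i = 1 ∧ D.hi i = S.l - 1 ∧
     (D.IsSupport (D.Xi i k) ∨ D.IsRigidI (D.Xi i k) ∨
       ∃ x ∈ D.Xi i k \ D.BI i, D.IsSuppToRigid (D.Xi i k) x)) ∨
   (k = 1 ∧ Odd i ∧ D.hi i = S.l - 1 ∧ D.hi (i + 1) = S.l - 1 ∧
     D.m i + D.m (i + 1) < S.l - 1 ∧ D.IsRigidI (D.Xi i k)) ∨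
   (k = 1 ∧ Even i ∧ D.lo i = 1 ∧ D.lo (i + 1) = 1 ∧
     D.m i + D.m (i + 1) < S.l - 1 ∧ D.IsSupport (D.Xi i k)) ∨
   (k = 1 ∧ Odd i ∧ D.hi i = S.l - 1 ∧ D.hi (i + 1) = S.l - 1 ∧
     D.m i + D.m (i + 1) = S.l - 1 ∧
     (D.IsRigidI (D.Xi i k) ∨
       ∃ x ∈ Finset.Icc (S.s i - (S.l - D.m (i + 1))) (S.s i - 1),
         D.IsSuppToRigid (D.Xi i k) x)) ∨
   (k = 1 ∧ Even i ∧ D.lo i = 1 ∧ D.lo (i + 1) = 1 ∧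
     D.m i + D.m (i + 1) = S.l - 1 ∧
     (D.IsSupport (D.Xi i k) ∨
       ∃ x ∈ Finset.Icc (S.s i - (S.l - 1)) (S.s i - D.m i),
         D.IsSuppToRigid (D.Xi i k) x)) ∨
   (k = 2 ∧ S.d = 2 ∧ Even i ∧ D.lo i = 1 ∧ D.lo (i + 1) = S.l - D.lo (i + 2) + 1 ∧
     D.hi (i + 1) = S.l - D.hi i - 1 ∧ D.hi (i + 2) = S.l - 1 ∧
     ∃ x ∈ Finset.Icc (S.s (i + 1) - D.lo (i + 2)) (S.s i - D.hi i),
       D.IsSuppToRigid (D.Xi i k) x))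

/-- The configuration on `[i, i+k]` is full: `m_{i+j} = n_{i+j} - l_{i+j} + 1`. -/
def Full (D : CDatum S) (i k : ℤ) : Prop :=
  ∀ j, 0 ≤ j → j ≤ k → D.m (i + j) = D.hi (i + j) - D.lo (i + j) + 1

/-- `[a, b]` is a maximal run of indices with `X` nonempty
(an interval of the diagonal partition). -/
def IsBlock (D : CDatum S) (a b : ℤ) : Prop :=
  2 ≤ a ∧ b ≤ S.p ∧ a ≤ b ∧ (∀ j, a ≤ j → j ≤ b → (D.X j).Nonempty) ∧
    D.X (a - 1) = ∅ ∧ D.X (b + 1) = ∅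

/-- `[a, b]` is the first interval of the diagonal partition. -/
def FirstBlock (D : CDatum S) (a b : ℤ) : Prop :=
  D.IsBlock a b ∧ ∀ j, j < a → D.X j = ∅

/-- `[a, b]` is the last interval of the diagonal partition. -/
def LastBlock (D : CDatum S) (a b : ℤ) : Prop :=
  D.IsBlock a b ∧ ∀ j, b < j → D.X j = ∅

/-- `[a, b]` and `[a', b']` are consecutive intervals of the diagonal partition. -/
def ConsecBlocks (D : CDatum S) (a b a' b' : ℤ) : Prop :=
  D.IsBlock a b ∧ D.IsBlock a' b' ∧ b < a' ∧ ∀ j, b < j → j < a' → D.X j = ∅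

/-- The diagonal component `T = {i ∈ [2, p] : X i ≠ ∅}`. -/
noncomputable def T (D : CDatum S) : Finset ℤ :=
  {i ∈ Finset.Icc 2 S.p | (D.X i).Nonempty}

/-- The configuration on the block `[a, b]` is full admissible of type (III). -/
def FullType3 (D : CDatum S) (a b : ℤ) : Prop :=
  a = b ∧ D.lo a = 1 ∧ D.hi a = S.l - 1 ∧ D.m a = S.l - 1 ∧
    (D.IsSupport (D.Xi a 0) ∨ D.IsRigidI (D.Xi a 0) ∨
      ∃ x ∈ D.Xi a 0 \ D.BI a, D.IsSuppToRigid (D.Xi a 0) x)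

/-- A `Θ`-interval is rigid, support, or rigid to support. -/
def GoodTheta (D : CDatum S) (I : Finset ℤ) : Prop :=
  D.IsRigidI I ∨ D.IsSupport I ∨ ∃ x, D.IsRigidToSupp I x

/-- A `C`-datum is well-configured. -/
def WellConfigured (D : CDatum S) : Prop :=
  (D.T = ∅ ∧ ∃ x, 0 ≤ x ∧ x ≤ S.n ∧ D.R = Finset.Icc 1 x ∧ D.B = Finset.Icc (x + 1) S.n) ∨
  (D.T.Nonempty ∧
    (∀ a b, D.IsBlock a b → D.Admissible a (b - a) ∧ D.Full a (b - a)) ∧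
    (∀ a b a' b', D.ConsecBlocks a b a' b' →
      D.Xi a (b - a) ∩ D.Xi a' (b' - a') = ∅) ∧
    (∀ a b, D.FirstBlock a b → D.GoodTheta (Finset.Icc 1 (D.xiLo a - 1))) ∧
    (∀ a b a' b', D.ConsecBlocks a b a' b' →
      D.GoodTheta (Finset.Icc (D.xiHi b + 1) (D.xiLo a' - 1))) ∧
    (∀ a b, D.LastBlock a b → D.GoodTheta (Finset.Icc (D.xiHi b + 1) S.n)) ∧
    (∀ a b, D.FirstBlock a b → D.IsRigidI (D.Xi a (b - a)) →
      D.IsRigidI (Finset.Icc 1 (D.xiLo a - 1)) ∨ D.FullType3 a b) ∧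
    (∀ a b a' b', D.ConsecBlocks a b a' b' → D.IsRigidI (D.Xi a' (b' - a')) →
      D.IsRigidI (Finset.Icc (D.xiHi b + 1) (D.xiLo a' - 1)) ∨ D.FullType3 a' b') ∧
    (∀ a b a' b', D.ConsecBlocks a b a' b' → D.IsSupport (D.Xi a (b - a)) →
      D.IsSupport (Finset.Icc (D.xiHi b + 1) (D.xiLo a' - 1)) ∨ D.FullType3 a b) ∧
    (∀ a b, D.LastBlock a b → D.IsSupport (D.Xi a (b - a)) →
      D.IsSupport (Finset.Icc (D.xiHi b + 1) S.n) ∨ D.FullType3 a b))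

/-- The summand count `|R| + |B| + Σ_{i=2}^p m_i`. -/
noncomputable def count (D : CDatum S) : ℤ :=
  (D.R.card : ℤ) + (D.B.card : ℤ) + ∑ i ∈ Finset.Icc 2 S.p, D.m i

end CDatum

/-!
Both `𝖱_i, 𝖱_{i+1}` and `𝖡_i, 𝖡_{i+1}` are intervals attached to the two ends of a gap between
consecutive `s`'s, and `2 (s_{j+1} - s_j)` is `d l` for odd `j` and `(d - 2) l + 4` for even `j`.
When the two intervals point away from each other the gap is positive and they are disjoint.
When they point towards each other the gap is `d l / 2`: for `d = 2` the rigidity inequalities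
`n_i + n_{i+1} ≤ l - 1` (for `𝖱`) and `l_i + l_{i+1} ≥ l + 1` (for `𝖡`) make them cover it,
while for `d ≠ 2` (so `l = 2` or `d ≥ 4`) the gap exceeds `2l - 4`, too wide for two intervals
of length at most `l - 1` to meet.
-/

theorem Finset.Icc_inter_Icc_eq_empty_of_lt {α : Type*} [Preorder α] [LocallyFiniteOrder α]
    [DecidableEq α] {a b c d : α} (h : b < c) : Finset.Icc a b ∩ Finset.Icc c d = ∅ :=
  Finset.disjoint_iff_inter_eq_empty.mp <| Finset.disjoint_left.mpr fun _ hx hx' =>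
    ((Finset.mem_Icc.mp hx).2.trans_lt (h.trans_le (Finset.mem_Icc.mp hx').1)).false

theorem Int.Icc_union_Icc_of_le_add_one {a b c d : ℤ} (hac : a ≤ c) (hcb : c ≤ b + 1)
    (hbd : b ≤ d) : Finset.Icc a b ∪ Finset.Icc c d = Finset.Icc a d := by
  ext x
  simp only [Finset.mem_union, Finset.mem_Icc]
  omega

namespace NakSetup

variable (S : NakSetup) {i : ℤ}

theorem two_mul_s_succ_sub_s_of_odd (hi : 1 ≤ i) (hip : i + 1 ≤ S.p) (ho : Odd i) :
    2 * (S.s (i + 1) - S.s i) = S.d * S.l := by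
  linear_combination S.hs_even (i + 1) (by omega) hip ho.add_one - S.hs_odd i hi (by omega) ho

theorem two_mul_s_succ_sub_s_of_even (hi : 1 ≤ i) (hip : i + 1 ≤ S.p) (he : Even i) :
    2 * (S.s (i + 1) - S.s i) = (S.d - 2) * S.l + 4 := by
  linear_combination S.hs_odd (i + 1) (by omega) hip he.add_one - S.hs_even i hi (by omega) he

theorem s_lt_s_succ (hi : 1 ≤ i) (hip : i + 1 ≤ S.p) : S.s i < S.s (i + 1) := by
  have hdl : 0 ≤ (S.d - 2) * S.l := mul_nonneg (by linarith [S.hd]) (by linarith [S.hl])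
  rcases Int.even_or_odd i with he | ho
  · linarith [S.two_mul_s_succ_sub_s_of_even hi hip he]
  · nlinarith [S.two_mul_s_succ_sub_s_of_odd hi hip ho, S.hd, S.hl]

theorem four_mul_l_sub_two_lt (hd : S.d ≠ 2) : 4 * (S.l - 2) < S.d * S.l := by
  rcases S.hcase with hl | ⟨hl, ⟨r, hr⟩, -⟩
  · nlinarith [S.hd]
  · have h4 : 4 ≤ S.d := by have := S.hd; omega
    nlinarith

end NakSetup

namespace CDatum

variable {S : NakSetup} (D : CDatum S) {i : ℤ}

theorem one_le_lo : 1 ≤ D.lo i := by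
  unfold lo
  split_ifs with h
  · exact (Finset.mem_Icc.mp (D.hX i (Finset.min'_mem _ h))).1
  · linarith [S.hl]

theorem hi_le : D.hi i ≤ S.l - 1 := by
  unfold hi
  split_ifs with h
  · exact (Finset.mem_Icc.mp (D.hX i (Finset.max'_mem _ h))).2
  · linarith [S.hl]

theorem lo_le_hi (h : (D.X i).Nonempty) : D.lo i ≤ D.hi i := by
  simp only [lo, hi, dif_pos h]
  exact Finset.min'_le _ _ (Finset.max'_mem _ h)

theorem RI_of_odd (ho : Odd i) :
    D.RI i = Finset.Icc (S.s (i - 1) - (S.l - D.lo i) + 1) (S.s (i - 1)) := by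
  simp only [RI, if_pos ho]

theorem RI_of_even (he : Even i) :
    D.RI i = Finset.Icc (S.s (i - 1)) (S.s (i - 1) + (S.l - D.lo i) - 1) := by
  simp only [RI, if_neg (Int.not_odd_iff_even.mpr he)]

theorem BI_of_odd (ho : Odd i) : D.BI i = Finset.Icc (S.s i) (S.s i + D.hi i - 1) := by
  simp only [BI, if_pos ho]

theorem BI_of_even (he : Even i) : D.BI i = Finset.Icc (S.s i - D.hi i + 1) (S.s i) := by
  simp only [BI, if_neg (Int.not_odd_iff_even.mpr he)]

theorem RI_union_RI_succ (hrig : D.Rigid) (h2i : 2 ≤ i) (hip : i + 1 ≤ S.p)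
    (hne : (D.X i).Nonempty) (hne' : (D.X (i + 1)).Nonempty) (he : Even i) (hd : S.d = 2) :
    D.RI i ∪ D.RI (i + 1) = Finset.Icc (S.s (i - 1)) (S.s i) := by
  rw [D.RI_of_even he, D.RI_of_odd he.add_one, add_sub_cancel_right]
  have hs := S.two_mul_s_succ_sub_s_of_odd (by omega) (by omega) (he.sub_odd odd_one)
  rw [sub_add_cancel, hd] at hs
  have hhi := (hrig.2.1 (i + 1) (by omega) hip he.add_one).1
  rw [add_sub_cancel_right] at hhi
  have := D.lo_le_hi hne
  have := D.lo_le_hi hne'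
  have := D.one_le_lo (i := i)
  have := D.one_le_lo (i := i + 1)
  exact Int.Icc_union_Icc_of_le_add_one (by omega) (by omega) (by omega)

theorem RI_inter_RI_succ (h2i : 2 ≤ i) (hip : i + 1 ≤ S.p) (h : ¬(Even i ∧ S.d = 2)) :
    D.RI i ∩ D.RI (i + 1) = ∅ := by
  rcases Int.even_or_odd i with he | ho
  · rw [D.RI_of_even he, D.RI_of_odd he.add_one, add_sub_cancel_right]
    have hs := S.two_mul_s_succ_sub_s_of_odd (by omega) (by omega) (he.sub_odd odd_one)
    rw [sub_add_cancel] at hs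
    have := S.four_mul_l_sub_two_lt fun hd => h ⟨he, hd⟩
    have := D.one_le_lo (i := i)
    have := D.one_le_lo (i := i + 1)
    exact Finset.Icc_inter_Icc_eq_empty_of_lt (by omega)
  · rw [D.RI_of_odd ho, D.RI_of_even ho.add_one, add_sub_cancel_right]
    exact Finset.Icc_inter_Icc_eq_empty_of_lt
      (by simpa using S.s_lt_s_succ (i := i - 1) (by omega) (by omega))

theorem BI_union_BI_succ (hrig : D.Rigid) (h2i : 2 ≤ i) (hip : i + 1 ≤ S.p)
    (hne : (D.X i).Nonempty) (hne' : (D.X (i + 1)).Nonempty) (ho : Odd i) (hd : S.d = 2) :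
    D.BI i ∪ D.BI (i + 1) = Finset.Icc (S.s i) (S.s (i + 1)) := by
  rw [D.BI_of_odd ho, D.BI_of_even ho.add_one]
  have hs := S.two_mul_s_succ_sub_s_of_odd (by omega) hip ho
  rw [hd] at hs
  have hlo := (hrig.2.1 i h2i (by omega) ho).2.1
  have := D.lo_le_hi hne
  have := D.lo_le_hi hne'
  have := D.hi_le (i := i)
  have := D.hi_le (i := i + 1)
  exact Int.Icc_union_Icc_of_le_add_one (by omega) (by omega) (by omega)

theorem BI_inter_BI_succ (h2i : 2 ≤ i) (hip : i + 1 ≤ S.p) (h : ¬(Odd i ∧ S.d = 2)) :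
    D.BI i ∩ D.BI (i + 1) = ∅ := by
  rcases Int.even_or_odd i with he | ho
  · rw [D.BI_of_even he, D.BI_of_odd he.add_one]
    exact Finset.Icc_inter_Icc_eq_empty_of_lt (S.s_lt_s_succ (by omega) hip)
  · rw [D.BI_of_odd ho, D.BI_of_even ho.add_one]
    have hs := S.two_mul_s_succ_sub_s_of_odd (by omega) hip ho
    have := S.four_mul_l_sub_two_lt fun hd => h ⟨ho, hd⟩
    have := D.hi_le (i := i)
    have := D.hi_le (i := i + 1)
    exact Finset.Icc_inter_Icc_eq_empty_of_lt (by omega)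

end CDatum

/-- for a rigid `C`-datum with `X i ≠ ∅` and `X (i+1) ≠ ∅`:
(a) if `i` is even and `d = 2` then `𝖱_i ∪ 𝖱_{i+1} = [s_{i-1}, s_i]`, otherwise
`𝖱_i ∩ 𝖱_{i+1} = ∅`; (b) if `i` is odd and `d = 2` then `𝖡_i ∪ 𝖡_{i+1} = [s_i, s_{i+1}]`,
otherwise `𝖡_i ∩ 𝖡_{i+1} = ∅`. -/
theorem stmt6 {S : NakSetup} (D : CDatum S) (hrig : D.Rigid) (i : ℤ)
    (h2i : 2 ≤ i) (hip : i + 1 ≤ S.p) (hne : (D.X i).Nonempty)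
    (hne' : (D.X (i + 1)).Nonempty) :
    ((Even i ∧ S.d = 2 → D.RI i ∪ D.RI (i + 1) = Finset.Icc (S.s (i - 1)) (S.s i)) ∧
      (¬(Even i ∧ S.d = 2) → D.RI i ∩ D.RI (i + 1) = ∅)) ∧
    ((Odd i ∧ S.d = 2 → D.BI i ∪ D.BI (i + 1) = Finset.Icc (S.s i) (S.s (i + 1))) ∧
      (¬(Odd i ∧ S.d = 2) → D.BI i ∩ D.BI (i + 1) = ∅)) :=
  ⟨⟨fun ⟨he, hd⟩ => D.RI_union_RI_succ hrig h2i hip hne hne' he hd, D.RI_inter_RI_succ h2i hip⟩,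
    fun ⟨ho, hd⟩ => D.BI_union_BI_succ hrig h2i hip hne hne' ho hd, D.BI_inter_BI_succ h2i hip⟩
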